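/- Suppose E_{(λ_0,…,λ_n)} is an extended Chebyshev system for the two-point set {a,b}, where a ≠ b are real. Then E_{(λ_0,…,λ_n)} is closed under complex conjugation if and only if every Bernstein basis function p_{n,k}, k = 0,…,n, is real-valued on ℝ. -/

import Mathlib

open Filter Topology Set

noncomputable section

/-- The differential operator `(d/dx − λ₀)⋯(d/dx − λₙ)` applied to `f`,
where `λ₀,…,λₙ` are the entries of the list. -/
def LOp : List ℂ → (ℝ → ℂ) → (ℝ → ℂ)
  | [], f => f
  | c :: r, f => LOp r (fun x => deriv f x - c * f x)

/-- The space `E_Λ` of exponential polynomials with eigenvalue vector `l`. -/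
def ExpPoly (l : List ℂ) : Set (ℝ → ℂ) :=
  {f | ContDiff ℝ (⊤ : ℕ∞) f ∧ LOp l f = 0}

/-- `f` has a zero of order (multiplicity) exactly `k` at `x₀`. -/
def HasZeroOfOrder (f : ℝ → ℂ) (x₀ : ℝ) (k : ℕ) : Prop :=
  (∀ j < k, iteratedDeriv j f x₀ = 0) ∧ iteratedDeriv k f x₀ ≠ 0

/-- `E_l` (with `l.length = n + 1`) is an extended Chebyshev system for `A ⊆ ℝ`:
every nonzero member has at most `n` zeros in `A`, counted with multiplicity. -/
def IsExtChebyshev (l : List ℂ) (A : Set ℝ) : Prop :=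
  ∀ f ∈ ExpPoly l, f ≠ 0 → ∀ (s : Finset ℝ) (m : ℝ → ℕ),
    (↑s : Set ℝ) ⊆ A → (∀ x ∈ s, ∀ j < m x, iteratedDeriv j f x = 0) →
    ∑ x ∈ s, m x ≤ l.length - 1

/-- `p k`, `k = 0,…,n` (with `l.length = n + 1`) is the normalized Bernstein basis of
`E_l` for the points `a ≠ b`: `p k` lies in `E_l`, has a zero of order exactly `k`
at `a`, a zero of order exactly `n − k` at `b`, and `(p k)^{(k)}(a) = 1`. -/
def IsBernsteinBasis (l : List ℂ) (a b : ℝ) (p : ℕ → ℝ → ℂ) : Prop :=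
  ∀ k ≤ l.length - 1,
    p k ∈ ExpPoly l ∧ HasZeroOfOrder (p k) a k ∧
      HasZeroOfOrder (p k) b (l.length - 1 - k) ∧ iteratedDeriv k (p k) a = 1

/-- `E_l` is closed under (pointwise) complex conjugation. -/
def ConjClosed (l : List ℂ) : Prop :=
  ∀ f ∈ ExpPoly l, (fun x => starRingEnd ℂ (f x)) ∈ ExpPoly l

/-!
Conjugation preserves orders of zeros and fixes the normalisation `1`, so if `E_Λ` is closed
under conjugation, `conj p_k` is again the `k`-th Bernstein function; the Chebyshev property on
`{a, b}` makes that function unique, so `p_k` is real. Conversely, the Taylor data of the `p_k`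
at `a` is triangular with unit diagonal, and a member of `E_Λ` vanishing to order `n + 1` at `a`
is zero, so the `p_k` span `E_Λ`; the span of real functions is closed under conjugation.
-/

lemma iteratedDeriv_star {𝕜 F : Type*} [NontriviallyNormedField 𝕜] [StarRing 𝕜] [TrivialStar 𝕜]
    [NormedAddCommGroup F] [NormedSpace 𝕜 F] [StarAddMonoid F] [ContinuousStar F]
    [StarModule 𝕜 F] (n : ℕ) (f : 𝕜 → F) :
    iteratedDeriv n (star f) = star (iteratedDeriv n f) := by
  induction n with
  | zero => rfl
  | succ n ih =>
    rw [iteratedDeriv_succ, iteratedDeriv_succ, ih]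
    exact deriv.star'

lemma Submodule.star_mem_of_mem_span {R M : Type*} [CommSemiring R] [StarRing R]
    [AddCommMonoid M] [StarAddMonoid M] [Module R M] [StarModule R M] {E : Submodule R M}
    {S : Set M} (hS : ∀ s ∈ S, star s ∈ E) {f : M} (hf : f ∈ span R S) : star f ∈ E :=
  (span_le (p := E.comap (starLinearEquiv R).toLinearMap)).2 hS hf

lemma LOp_zero (l : List ℂ) : LOp l 0 = 0 := by
  induction l with
  | nil => rfl
  | cons c r ih =>
    show LOp r (deriv 0 - c • 0) = 0
    simpa using ih

lemma LOp_smul_add (l : List ℂ) {f g : ℝ → ℂ} (hf : ContDiff ℝ (⊤ : ℕ∞) f)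
    (hg : ContDiff ℝ (⊤ : ℕ∞) g) (c : ℂ) :
    LOp l (c • f + g) = c • LOp l f + LOp l g := by
  induction l generalizing f g with
  | nil => rfl
  | cons d r ih =>
    have hderiv : deriv (c • f + g) = c • deriv f + deriv g := funext fun x =>
      (((hf.differentiable (by simp) x).hasDerivAt.const_smul c).add
        (hg.differentiable (by simp) x).hasDerivAt).deriv
    have hsmooth {h : ℝ → ℂ} (hh : ContDiff ℝ (⊤ : ℕ∞) h) :
        ContDiff ℝ (⊤ : ℕ∞) (deriv h - d • h) :=
      (contDiff_infty_iff_deriv.mp hh).2.sub (hh.const_smul d)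
    show LOp r (deriv (c • f + g) - d • (c • f + g)) =
      c • LOp r (deriv f - d • f) + LOp r (deriv g - d • g)
    rw [← ih (hsmooth hf) (hsmooth hg), hderiv]
    congr 1
    module

def expPolySubmodule (l : List ℂ) : Submodule ℂ (ℝ → ℂ) where
  carrier := ExpPoly l
  zero_mem' := ⟨contDiff_zero_fun, LOp_zero l⟩
  add_mem' {f g} hf hg :=
    ⟨hf.1.add hg.1, by simpa [hf.2, hg.2] using LOp_smul_add l hf.1 hg.1 1⟩
  smul_mem' c f hf :=
    ⟨hf.1.const_smul c, by
      simpa [hf.2, LOp_zero] using LOp_smul_add l hf.1 (g := 0) contDiff_zero_fun c⟩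

lemma mem_expPolySubmodule {l : List ℂ} {f : ℝ → ℂ} : f ∈ expPolySubmodule l ↔ f ∈ ExpPoly l :=
  Iff.rfl

lemma IsExtChebyshev.eq_zero_of_iteratedDeriv_eq_zero {l : List ℂ} {a b : ℝ}
    (hcheb : IsExtChebyshev l {a, b}) (hab : a ≠ b) {f : ℝ → ℂ} (hf : f ∈ ExpPoly l)
    {ma mb : ℕ} (ha : ∀ j < ma, iteratedDeriv j f a = 0) (hb : ∀ j < mb, iteratedDeriv j f b = 0)
    (hlen : l.length - 1 < ma + mb) : f = 0 := by
  by_contra hne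
  have hcount := hcheb f hf hne {a, b} (fun x => if x = a then ma else mb) (by simp) ?_
  · rw [Finset.sum_pair hab, if_pos rfl, if_neg hab.symm] at hcount
    omega
  · intro x hx j hj
    simp only [Finset.mem_insert, Finset.mem_singleton] at hx
    rcases hx with rfl | rfl
    · exact ha j (by simpa using hj)
    · exact hb j (by simpa [hab.symm] using hj)

lemma IsExtChebyshev.eq_of_iteratedDeriv_eq {l : List ℂ} {a b : ℝ}
    (hcheb : IsExtChebyshev l {a, b}) (hab : a ≠ b) {f g : ℝ → ℂ} (hf : f ∈ ExpPoly l)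
    (hg : g ∈ ExpPoly l) {k : ℕ} (ha : ∀ j ≤ k, iteratedDeriv j f a = iteratedDeriv j g a)
    (hb : ∀ j < l.length - 1 - k, iteratedDeriv j f b = iteratedDeriv j g b) : f = g := by
  have hderiv (j : ℕ) (x : ℝ) :
      iteratedDeriv j (f - g) x = iteratedDeriv j f x - iteratedDeriv j g x :=
    iteratedDeriv_sub (hf.1.contDiffAt.of_le (by exact_mod_cast le_top))
      (hg.1.contDiffAt.of_le (by exact_mod_cast le_top))
  refine sub_eq_zero.mp (hcheb.eq_zero_of_iteratedDeriv_eq_zero hab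
    (sub_mem (mem_expPolySubmodule.2 hf) (mem_expPolySubmodule.2 hg))
    (ma := k + 1) (mb := l.length - 1 - k)
    (fun j hj => ?_) (fun j hj => ?_) (by omega))
  · rw [hderiv, ha j (Nat.le_of_lt_succ hj), sub_self]
  · rw [hderiv, hb j hj, sub_self]

theorem le_span_of_iteratedDeriv_triangular {E : Submodule ℂ (ℝ → ℂ)} {a : ℝ} {n : ℕ}
    (hE : ∀ f ∈ E, ContDiff ℝ n f)
    (huniq : ∀ f ∈ E, (∀ j ≤ n, iteratedDeriv j f a = 0) → f = 0) {p : ℕ → ℝ → ℂ}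
    (hpE : ∀ k ≤ n, p k ∈ E) (hpa : ∀ k ≤ n, ∀ j < k, iteratedDeriv j (p k) a = 0)
    (hpk : ∀ k ≤ n, iteratedDeriv k (p k) a = 1) :
    E ≤ Submodule.span ℂ (p '' Iic n) := by
  suffices key : ∀ m ≤ n + 1, ∀ f ∈ E, (∀ j < m, iteratedDeriv j f a = 0) →
      f ∈ Submodule.span ℂ (p '' Iic n) from
    fun f hf => key 0 (Nat.zero_le _) f hf fun j hj => absurd hj j.not_lt_zero
  refine fun m hm => Nat.decreasingInduction (fun m hm ih => ?_) ?_ hm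
  · intro f hf hfa
    have hmn : m ≤ n := Nat.le_of_lt_succ hm
    set c := iteratedDeriv m f a
    have hpm : p m ∈ Submodule.span ℂ (p '' Iic n) := Submodule.subset_span ⟨m, hmn, rfl⟩
    have hg : f - c • p m ∈ Submodule.span ℂ (p '' Iic n) := by
      refine ih _ (sub_mem hf (E.smul_mem c (hpE m hmn))) fun j hj => ?_
      have hjn : (j : WithTop ℕ∞) ≤ n := by exact_mod_cast (Nat.le_of_lt_succ hj).trans hmn
      rw [iteratedDeriv_sub ((hE f hf).contDiffAt.of_le hjn)
        ((hE _ (E.smul_mem c (hpE m hmn))).contDiffAt.of_le hjn), iteratedDeriv_const_smul_field]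
      rcases Nat.lt_succ_iff_lt_or_eq.mp hj with hj | rfl
      · simp [hfa j hj, hpa m hmn j hj]
      · simp [c, hpk j hmn]
    simpa using add_mem hg (Submodule.smul_mem _ c hpm)
  · intro f hf hfa
    rw [huniq f hf fun j hj => hfa j (Nat.lt_succ_of_le hj)]
    exact zero_mem _

/-- **Proposition.** Suppose `E_{(λ_0,…,λ_n)}` is an extended Chebyshev system for the
two-point set `{a,b}`, `a ≠ b` real, and let `p k`, `k = 0,…,n`, be the Bernstein
basis of `E_{(λ_0,…,λ_n)}` for `a ≠ b`.  Then `E_{(λ_0,…,λ_n)}` is closed under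
complex conjugation if and only if every `p k` is real-valued on `ℝ`. -/
theorem conjClosed_iff_bernstein_real (l : List ℂ) (a b : ℝ) (hab : a ≠ b)
    (hcheb : IsExtChebyshev l {a, b})
    (p : ℕ → ℝ → ℂ) (hp : IsBernsteinBasis l a b p) :
    ConjClosed l ↔ ∀ k ≤ l.length - 1, ∀ x : ℝ, (p k x).im = 0 := by
  have hreal_iff (k : ℕ) : (∀ x, (p k x).im = 0) ↔ star (p k) = p k := by
    simp only [funext_iff, Pi.star_apply, ← Complex.conj_eq_iff_im, RCLike.star_def]
  simp only [hreal_iff]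
  constructor
  · intro hconj k hk
    obtain ⟨hmem, ha, hb, hnorm⟩ := hp k hk
    refine hcheb.eq_of_iteratedDeriv_eq hab (hconj _ hmem) hmem (k := k) (fun j hj => ?_)
      fun j hj => by simp [iteratedDeriv_star, hb.1 j hj]
    rcases Nat.lt_or_eq_of_le hj with hj | rfl
    · simp [iteratedDeriv_star, ha.1 j hj]
    · simp [iteratedDeriv_star, hnorm]
  · intro hreal f hf
    have hspan := le_span_of_iteratedDeriv_triangular (E := expPolySubmodule l)
      (fun f hf => hf.1.of_le (WithTop.coe_le_coe.2 le_top))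
      (fun f hf hfa => hcheb.eq_zero_of_iteratedDeriv_eq_zero hab hf (mb := 0)
        (fun j hj => hfa j (Nat.le_of_lt_succ hj)) (by simp) (by omega))
      (fun k hk => (hp k hk).1) (fun k hk => (hp k hk).2.1.1) (fun k hk => (hp k hk).2.2.2) hf
    refine Submodule.star_mem_of_mem_span (E := expPolySubmodule l) ?_ hspan
    rintro _ ⟨k, hk, rfl⟩
    rw [hreal k hk]
    exact (hp k hk).1
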